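/- arXiv:1407.1419 — 2 statements merged into one kernel-verified Lean document; each statement's English description precedes it below -/
import Mathlib

section
/- Let F ∈ L_1(S), let p ∈ ℤ and q ∈ ℕ be coprime, and let m ∈ ℕ. Then a point x ∈ S is a periodic (mod 1) point of F of period mq with rotation number ρ_F(x) = p/q if and only if x is a true periodic point of F^q − p of least period m. -/
open Set Filter Function

noncomputable section

/-- The real axis in `ℂ`. -/
def realAxis : Set ℂ := {z : ℂ | z.im = 0}

/-- The union of the branches of `S`. -/
def branches : Set ℂ := {z : ℂ | (∃ m : ℤ, z.re = (m : ℝ)) ∧ z.im ∈ Set.Icc (0 : ℝ) 1}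

/-- The universal covering `S = ℝ ∪ B` of the space `σ`. -/
def Sspace : Set ℂ := realAxis ∪ branches

/-- The branch `B_m`. -/
def branch (m : ℤ) : Set ℂ := {z : ℂ | z.re = (m : ℝ) ∧ z.im ∈ Set.Icc (0 : ℝ) 1}

/-- `F` is a continuous self-map of `S` of degree `d`, i.e. `F ∈ L_d(S)`. -/
def DegMap (d : ℤ) (F : ℂ → ℂ) : Prop :=
  Set.MapsTo F Sspace Sspace ∧ ContinuousOn F Sspace ∧
    ∀ z ∈ Sspace, F (z + 1) = F z + (d : ℂ)

/-- `z` is a periodic (mod 1) point of `F` of period `n`. -/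
def IsPeriodicMod1 (F : ℂ → ℂ) (z : ℂ) (n : ℕ) : Prop :=
  0 < n ∧ (∃ k : ℤ, F^[n] z = z + (k : ℂ)) ∧
    ∀ i : ℕ, 0 < i → i < n → ∀ k : ℤ, F^[i] z ≠ z + (k : ℂ)

/-- The set `Per(F)` of periods (mod 1) of `F`. -/
def PerSet (F : ℂ → ℂ) : Set ℕ := {n : ℕ | ∃ z ∈ Sspace, IsPeriodicMod1 F z n}

/-- `x` is a true periodic point of `G` of least period `n`. -/
def IsTruePeriodic (G : ℂ → ℂ) (x : ℂ) (n : ℕ) : Prop :=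
  0 < n ∧ G^[n] x = x ∧ ∀ i : ℕ, 0 < i → i < n → G^[i] x ≠ x

/-- The rotation number of `z` under `F` is `ρ`. -/
def HasRotNum (F : ℂ → ℂ) (z : ℂ) (ρ : ℝ) : Prop :=
  Filter.Tendsto (fun n : ℕ => ((F^[n] z).re - z.re) / (n : ℝ)) Filter.atTop (nhds ρ)

/-- `Rot_ℝ(F)`. -/
def RotR (F : ℂ → ℂ) : Set ℝ := {ρ : ℝ | ∃ x : ℝ, HasRotNum F (x : ℂ) ρ}

/-- `Rot(F)`. -/
def RotSet (F : ℂ → ℂ) : Set ℝ := {ρ : ℝ | ∃ z ∈ Sspace, HasRotNum F z ρ}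

/-- `Per(α, F)`: periods (mod 1) of points with rotation number `α`. -/
def PerRot (F : ℂ → ℂ) (α : ℝ) : Set ℕ :=
  {n : ℕ | ∃ z ∈ Sspace, IsPeriodicMod1 F z n ∧ HasRotNum F z α}

/-- The Sharkovsky ordering `a ≤_Sh b`. -/
def sharkLe (a b : ℕ) : Prop :=
  if ordCompl[2] a = 1 then
    (if ordCompl[2] b = 1 then a.factorization 2 ≤ b.factorization 2 else True)
  else
    ordCompl[2] b ≠ 1 ∧ (b.factorization 2 < a.factorization 2 ∨
      (b.factorization 2 = a.factorization 2 ∧ ordCompl[2] b ≤ ordCompl[2] a))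

/-- The initial segment `Shs(s)` of the Sharkovsky ordering. -/
def Shs (s : ℕ) : Set ℕ := {k : ℕ | 0 < k ∧ sharkLe k s}

/-- Initial segments of the Sharkovsky ordering: either `Shs(s)` for some `s ∈ ℕ`,
or the set of all powers of `2` (corresponding to the symbol `2^∞`). -/
def ShInitialSeg (E : Set ℕ) : Prop :=
  (∃ s : ℕ, 0 < s ∧ E = Shs s) ∨ E = {k : ℕ | ∃ i : ℕ, k = 2 ^ i}

/-- `M(c, d)`. -/
def Mset (c d : ℝ) : Set ℕ :=
  {n : ℕ | 0 < n ∧ ∃ k : ℤ, c < (k : ℝ) / (n : ℝ) ∧ (k : ℝ) / (n : ℝ) < d}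

/-- `Λ(ρ, E)`. -/
def Lam (ρ : ℝ) (E : Set ℕ) : Set ℕ :=
  {m : ℕ | ∃ k : ℤ, ∃ n : ℕ, 0 < n ∧ Int.gcd k (n : ℤ) = 1 ∧ ρ = (k : ℝ) / (n : ℝ) ∧
    ∃ q ∈ E, m = n * q}

/-- The lifted orbit of `z` under `F`. -/
def LOrb (F : ℂ → ℂ) (z : ℂ) : Set ℂ :=
  {w : ℂ | ∃ n : ℕ, ∃ k : ℤ, w = F^[n] z + (k : ℂ)}

/-- The convex hull of `A` in `S`: the smallest closed connected subset of `S`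
containing `A`. -/
def sHull (A : Set ℂ) : Set ℂ :=
  ⋂₀ {C : Set ℂ | A ⊆ C ∧ C ⊆ Sspace ∧ IsClosed C ∧ IsConnected C}

/-- Compact nondegenerate intervals of `S`. -/
def IsCNInterval (I : Set ℂ) : Prop :=
  ∃ a b : ℂ, a ∈ Sspace ∧ b ∈ Sspace ∧ a ≠ b ∧ I = sHull {a, b}

/-- `I` `G`-covers `J`: there is a subinterval `I' ⊆ I` with `G(I') = J`. -/
def Covers (G : ℂ → ℂ) (I J : Set ℂ) : Prop :=
  ∃ a b : ℂ, a ∈ I ∧ b ∈ I ∧ sHull {a, b} ⊆ I ∧ G '' sHull {a, b} = J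

/-- The interior of `K` relative to the subspace `S`. -/
def relInterior (K : Set ℂ) : Set ℂ := {z ∈ Sspace | K ∈ nhdsWithin z Sspace}

/-- The map `F_0 : S → B_0`, `F_0(z) = F(z) − Re(F(z))`. -/
def Fzero (F : ℂ → ℂ) (z : ℂ) : ℂ := F z - ((F z).re : ℂ)

/-- The set `A + ℤ` of integer translates of `A`. -/
def trZ (A : Set ℂ) : Set ℂ := {w : ℂ | ∃ z ∈ A, ∃ k : ℤ, w = z + (k : ℂ)}

/-- `(I, <_I)` positively `G`-covers `(J, <_J)`, where `I` is the oriented interval with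
endpoints `a = min I`, `b = max I`, and `J` the oriented interval with endpoints
`c = min J`, `d = max J`; the order along `I` is: `x ≤_I y` iff `x ∈ ⟨{a, y}⟩`. -/
def PosCovers (G : ℂ → ℂ) (a b c d : ℂ) : Prop :=
  ∃ x y : ℂ, x ∈ sHull {a, b} ∧ y ∈ sHull {a, b} ∧ x ∈ sHull {a, y} ∧ G x = c ∧ G y = d

/-- `(I, <_I)` negatively `G`-covers `(J, <_J)`. -/
def NegCovers (G : ℂ → ℂ) (a b c d : ℂ) : Prop := PosCovers G a b d c

/-- A concrete 3-star `X₃ ⊆ ℂ` with branching point `0`: the union of the three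
segments `[-1,0]`, `[0,1]` and `[0,i]`. -/
def star3 : Set ℂ :=
  {z : ℂ | z.im = 0 ∧ z.re ∈ Set.Icc (-1 : ℝ) 1} ∪
    {z : ℂ | z.re = 0 ∧ z.im ∈ Set.Icc (0 : ℝ) 1}

/-- `TPer(f)`: the set of least periods of the periodic points of `f` in `X`. -/
def TPer (f : ℂ → ℂ) (X : Set ℂ) : Set ℕ :=
  {n : ℕ | ∃ x ∈ X, IsTruePeriodic f x n}

open Classical in
/-- The taxicab distance on `S`. -/
def sDist (x y : ℂ) : ℝ :=
  if (∃ m : ℤ, x.re = (m : ℝ) ∧ y.re = (m : ℝ)) ∧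
      x.im ∈ Set.Icc (0 : ℝ) 1 ∧ y.im ∈ Set.Icc (0 : ℝ) 1 then
    |x.im - y.im|
  else |x.im| + |x.re - y.re| + |y.im|

/-!
Since `F` commutes with integer translations, `(F^q - p)^[i] x = F^[i q] x - i p`, so `x` is a true
periodic point of `F^q - p` exactly when `F^[i q] x = x + i p` for the right `i`. A point with
`F^[N] x = x + c` has rotation number `c / N`, which forces the displacement after `m q` steps to be
`m p`; conversely, comparing two returns `F^[j] x = x + k` and `F^[m q] x = x + m p` gives
`q k = j p`, and coprimality makes every return time mod 1 a multiple of `q`.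
-/

open Topology

/-- `u n - n c / N` is `N`-periodic, hence bounded. -/
theorem tendsto_div_of_add_period {u : ℕ → ℝ} {N : ℕ} {c : ℝ} (hN : 0 < N)
    (hu : ∀ n, u (n + N) = u n + c) :
    Tendsto (fun n : ℕ => u n / n) atTop (𝓝 (c / N)) := by
  set v : ℕ → ℝ := fun n => u n - n * (c / N)
  have hv : Periodic v N := fun n => by
    simp only [v, hu, Nat.cast_add]
    field_simp
    ring
  have hfin : (Set.range v).Finite :=
    ((Set.finite_lt_nat N).image v).subset <| by
      rintro _ ⟨n, rfl⟩
      exact ⟨n % N, Nat.mod_lt n hN, hv.map_mod_nat n⟩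
  obtain ⟨b, hb⟩ := hfin.bddBelow
  obtain ⟨B, hB⟩ := hfin.bddAbove
  have hv0 : Tendsto (fun n : ℕ => v n / n) atTop (𝓝 0) :=
    tendsto_bdd_div_atTop_nhds_zero (.of_forall fun n => hb ⟨n, rfl⟩)
      (.of_forall fun n => hB ⟨n, rfl⟩) tendsto_natCast_atTop_atTop
  refine (zero_add (c / N) ▸ hv0.add_const (c / N)).congr' ?_
  filter_upwards [eventually_ne_atTop 0] with n hn
  simp only [v]
  field_simp
  ring

lemma Sspace_add_int {z : ℂ} (hz : z ∈ Sspace) (k : ℤ) : z + k ∈ Sspace := by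
  rcases hz with hz | ⟨⟨n, hn⟩, him⟩
  · left
    simp_all [realAxis]
  · right
    exact ⟨⟨n + k, by simp [hn]⟩, by simpa using him⟩

namespace DegMap

variable {F : ℂ → ℂ} {z : ℂ}

theorem map_add_int {d : ℤ} (hF : DegMap d F) (hz : z ∈ Sspace) (k : ℤ) :
    F (z + k) = F z + k * d := by
  induction k using Int.induction_on with
  | zero => simp
  | succ i ih =>
    have h := hF.2.2 _ (Sspace_add_int hz i)
    push_cast at h ih ⊢
    rw [← add_assoc, h, ih]
    ring
  | pred i ih =>
    have h := hF.2.2 _ (Sspace_add_int hz (-i - 1))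
    push_cast at h ih ⊢
    rw [show z + (-i - 1) + 1 = z + -i by ring, ih] at h
    linear_combination -h

theorem iterate_add_int (hF : DegMap 1 F) (hz : z ∈ Sspace) (k : ℤ) (n : ℕ) :
    F^[n] (z + k) = F^[n] z + k := by
  induction n with
  | zero => rfl
  | succ n ih =>
    rw [iterate_succ_apply', ih, iterate_succ_apply',
      hF.map_add_int (hF.1.iterate n hz), Int.cast_one, mul_one]

theorem iterate_sub_int (hF : DegMap 1 F) (hz : z ∈ Sspace) (k : ℤ) (n : ℕ) :
    F^[n] (z - k) = F^[n] z - k := by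
  simpa [sub_eq_add_neg] using hF.iterate_add_int hz (-k) n

theorem iterate_mul_eq_add_int (hF : DegMap 1 F) (hz : z ∈ Sspace) {N : ℕ} {c : ℤ}
    (h : F^[N] z = z + c) (t : ℕ) : F^[N * t] z = z + (t * c : ℤ) := by
  induction t with
  | zero => simp
  | succ t ih =>
    rw [mul_add_one, iterate_add_apply, h, hF.iterate_add_int hz, ih]
    push_cast
    ring

/-- Both sides come from computing `F^[n * j] z` in two ways. -/
theorem mul_eq_mul_of_iterate_eq_add_int (hF : DegMap 1 F) (hz : z ∈ Sspace) {n j : ℕ}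
    {a k : ℤ} (ha : F^[n] z = z + a) (hk : F^[j] z = z + k) : (n : ℤ) * k = j * a := by
  have h := hF.iterate_mul_eq_add_int hz ha j
  rw [mul_comm, hF.iterate_mul_eq_add_int hz hk n, add_right_inj] at h
  exact_mod_cast h

theorem iterate_iterate_sub_int (hF : DegMap 1 F) (hz : z ∈ Sspace) (p : ℤ) (q i : ℕ) :
    (fun w => F^[q] w - (p : ℂ))^[i] z = F^[i * q] z - (i * p : ℤ) := by
  induction i with
  | zero => simp
  | succ i ih =>
    rw [iterate_succ_apply', ih, hF.iterate_sub_int (hF.1.iterate _ hz), ← iterate_add_apply,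
      add_one_mul, add_comm q]
    push_cast
    ring

theorem iterate_iterate_sub_int_eq_self_iff (hF : DegMap 1 F) (hz : z ∈ Sspace) (p : ℤ)
    (q i : ℕ) :
    (fun w => F^[q] w - (p : ℂ))^[i] z = z ↔ F^[i * q] z = z + (i * p : ℤ) := by
  rw [hF.iterate_iterate_sub_int hz, sub_eq_iff_eq_add]

theorem hasRotNum_of_iterate_eq_add_int (hF : DegMap 1 F) (hz : z ∈ Sspace) {N : ℕ} {c : ℤ}
    (hN : 0 < N) (h : F^[N] z = z + c) : HasRotNum F z (c / N) :=
  tendsto_div_of_add_period hN fun n => by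
    rw [iterate_add_apply, h, hF.iterate_add_int hz, Complex.add_re, Complex.intCast_re]
    ring

end DegMap

theorem exists_eq_mul_of_mul_eq_mul_of_gcd_eq_one {p k : ℤ} {q j : ℕ} (hq : 0 < q)
    (hpq : Int.gcd p q = 1) (h : (q : ℤ) * k = j * p) : ∃ s : ℕ, j = s * q ∧ k = s * p := by
  have hdvd : (q : ℤ) ∣ j :=
    (Int.isCoprime_iff_gcd_eq_one.2 (by rwa [Int.gcd_comm])).dvd_of_dvd_mul_right ⟨k, h.symm⟩
  obtain ⟨s, rfl⟩ := Int.natCast_dvd_natCast.1 hdvd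
  refine ⟨s, mul_comm q s, mul_left_cancel₀ (by positivity : (q : ℤ) ≠ 0) ?_⟩
  rw [h]
  push_cast
  ring

/-- For `F ∈ L₁(S)`, `p, q` coprime and `m ∈ ℕ`: `x` is a periodic (mod 1)
point of `F` of period `mq` with rotation number `p/q` iff `x` is a true periodic point
of `F^q − p` of least period `m`. -/
theorem statement8 (F : ℂ → ℂ) (hF : DegMap 1 F) (p : ℤ) (q : ℕ) (hq : 0 < q)
    (hpq : Int.gcd p (q : ℤ) = 1) (m : ℕ) (x : ℂ) (hx : x ∈ Sspace) :
    (IsPeriodicMod1 F x (m * q) ∧ HasRotNum F x ((p : ℝ) / (q : ℝ))) ↔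
      IsTruePeriodic (fun w => F^[q] w - (p : ℂ)) x m := by
  have hG := hF.iterate_iterate_sub_int_eq_self_iff hx p q
  constructor
  · rintro ⟨⟨hmq, ⟨k, hk⟩, hmin⟩, hrot⟩
    have hm : 0 < m := Nat.pos_of_mul_pos_right hmq
    have hk' : k = m * p := by
      have h := tendsto_nhds_unique (hF.hasRotNum_of_iterate_eq_add_int hx hmq hk) hrot
      push_cast at h
      field_simp at h
      exact_mod_cast h
    refine ⟨hm, (hG m).2 (hk' ▸ hk), fun i hi him hGi => ?_⟩
    exact hmin (i * q) (Nat.mul_pos hi hq) (Nat.mul_lt_mul_of_pos_right him hq) _ ((hG i).1 hGi)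
  · rintro ⟨hm, hGm, hGmin⟩
    have hmq : 0 < m * q := Nat.mul_pos hm hq
    have hFmq := (hG m).1 hGm
    refine ⟨⟨hmq, ⟨_, hFmq⟩, fun j hj hjmq k hk => ?_⟩, ?_⟩
    · obtain ⟨s, rfl, rfl⟩ : ∃ s : ℕ, j = s * q ∧ k = s * p := by
        refine exists_eq_mul_of_mul_eq_mul_of_gcd_eq_one hq hpq
          (mul_left_cancel₀ (by positivity : (m : ℤ) ≠ 0) ?_)
        have := hF.mul_eq_mul_of_iterate_eq_add_int hx hFmq hk
        push_cast at this
        linear_combination this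
      exact hGmin s (Nat.pos_of_mul_pos_right hj) (Nat.lt_of_mul_lt_mul_right hjmq) ((hG s).2 hk)
    · convert hF.hasRotNum_of_iterate_eq_add_int hx hmq hFmq using 1
      push_cast
      field_simp

end
end

section
/- Let I_0, I_1, …, I_n be compact nondegenerate intervals of S with I_n = I_0 and, for each 0 ≤ i ≤ n−1, let F_i : I_i → S be a continuous map such that I_i F_i-covers I_{i+1}. Then there exist points x_i ∈ I_i for 0 ≤ i ≤ n such that F_i(x_i) = x_{i+1} for all 0 ≤ i ≤ n−1 and x_n = x_0. -/
open Set Filter Function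

noncomputable section

/-! For `x, y ∈ S` the hull `⟨{x, y}⟩` is an explicit arc: `sPath x y` parametrizes it by a
compact interval, with continuous inverse `sCoord x y`. Minimality of this arc among connected
subsets of `S` comes from continuous functions whose level set through a point of the arc meets
`S` in that point only (`Re`, `branchHeight`, `tiltedRe`). Transported to the real line, a
covering can be refined so that a subarc is mapped exactly onto any prescribed subarc (take a
preimage of each endpoint at minimal distance). Refining along the loop gives a subarc
`K ⊆ I₀` which `F_{n-1} ∘ ⋯ ∘ F_0` maps onto `I₀ ⊇ K`, so the composite has a fixed
point in `K` by the intermediate value theorem; its orbit is the required one. -/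

@[fun_prop]
lemma Continuous.complex_mk {α : Type*} [TopologicalSpace α] {f g : α → ℝ}
    (hf : Continuous f) (hg : Continuous g) : Continuous fun a => (⟨f a, g a⟩ : ℂ) :=
  Complex.equivRealProdCLM.symm.continuous.comp (hf.prodMk hg)

lemma im_nonneg_of_mem_Sspace {z : ℂ} (hz : z ∈ Sspace) : 0 ≤ z.im := by
  rcases hz with h | h
  · exact (h : z.im = 0).ge
  · exact h.2.1

lemma im_le_one_of_mem_Sspace {z : ℂ} (hz : z ∈ Sspace) : z.im ≤ 1 := by
  rcases hz with h | h
  · exact (h : z.im = 0).trans_le zero_le_one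
  · exact h.2.2

lemma exists_int_re_of_mem_Sspace {z : ℂ} (hz : z ∈ Sspace) (h : 0 < z.im) :
    ∃ m : ℤ, z.re = m := by
  rcases hz with h' | h'
  · exact absurd (h' : z.im = 0) h.ne'
  · exact h'.1

lemma isPreconnected_Sspace : IsPreconnected Sspace := by
  have hS : Sspace = ⋃ m : ℤ, realAxis ∪ branch m := by
    ext z
    simp only [Sspace, branches, branch, mem_iUnion, mem_union]
    constructor
    · rintro (h | ⟨⟨m, hm⟩, h⟩)
      exacts [⟨0, Or.inl h⟩, ⟨m, Or.inr ⟨hm, h⟩⟩]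
    · rintro ⟨m, h | ⟨hm, h⟩⟩
      exacts [Or.inl h, Or.inr ⟨⟨m, hm⟩, h⟩]
  have hreal : IsPreconnected realAxis := by
    have : realAxis = range ((↑) : ℝ → ℂ) := by
      ext z
      refine ⟨fun h => ⟨z.re, Complex.ext rfl (h : z.im = 0).symm⟩, ?_⟩
      rintro ⟨r, rfl⟩
      rfl
    exact this ▸ isPreconnected_range Complex.continuous_ofReal
  have hbranch : ∀ m : ℤ, IsPreconnected (branch m) := fun m => by
    have : branch m = (fun s : ℝ => (⟨m, s⟩ : ℂ)) '' Icc 0 1 := by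
      ext z
      refine ⟨fun h => ⟨z.im, h.2, Complex.ext h.1.symm rfl⟩, ?_⟩
      rintro ⟨s, hs, rfl⟩
      exact ⟨rfl, hs⟩
    exact this ▸ isPreconnected_Icc.image _ (by fun_prop)
  rw [hS]
  refine isPreconnected_iUnion ⟨0, mem_iInter.2 fun m => Or.inl rfl⟩ fun m => ?_
  exact (hreal.union ⟨m, 0⟩ rfl ⟨rfl, le_rfl, zero_le_one⟩ (hbranch m))

section Separation

variable {C : Set ℂ} {x y : ℂ}

lemma mem_of_separating (hC : IsPreconnected C) (hCS : C ⊆ Sspace) (hx : x ∈ C) (hy : y ∈ C)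
    {g : ℂ → ℝ} (hg : Continuous g) {p : ℂ} (hp : g p ∈ uIcc (g x) (g y))
    (huniq : ∀ z ∈ Sspace, g z = g p → z = p) : p ∈ C := by
  obtain ⟨z, hz, hgz⟩ := ((hC.image g hg.continuousOn).ordConnected.uIcc_subset
    (mem_image_of_mem g hx) (mem_image_of_mem g hy)) hp
  exact huniq z (hCS hz) hgz ▸ hz

lemma eq_of_re_eq_of_notMem_range {z : ℂ} (hz : z ∈ Sspace) {r : ℝ}
    (hr : r ∉ range ((↑) : ℤ → ℝ)) (h : z.re = r) : z = ⟨r, 0⟩ := by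
  refine Complex.ext h ((im_nonneg_of_mem_Sspace hz).eq_or_lt.elim Eq.symm fun hpos => ?_)
  obtain ⟨m, hm⟩ := exists_int_re_of_mem_Sspace hz hpos
  exact absurd ⟨m, hm.symm.trans h⟩ hr

def branchHeight (m : ℤ) (z : ℂ) : ℝ := z.im - 2 * |z.re - m|

lemma continuous_branchHeight (m : ℤ) : Continuous (branchHeight m) := by
  unfold branchHeight; fun_prop

lemma branchHeight_of_re_eq {m : ℤ} {z : ℂ} (h : z.re = m) : branchHeight m z = z.im := by
  simp [branchHeight, h]

lemma branchHeight_neg {m : ℤ} {z : ℂ} (hz : z ∈ Sspace) (h : z.re ≠ m) :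
    branchHeight m z < 0 := by
  have hd : 0 < |z.re - m| := abs_pos.2 (sub_ne_zero.2 h)
  rcases (im_nonneg_of_mem_Sspace hz).eq_or_lt with h0 | hpos
  · simp only [branchHeight, ← h0]; linarith
  obtain ⟨k, hk⟩ := exists_int_re_of_mem_Sspace hz hpos
  have hkm : (1 : ℝ) ≤ |z.re - m| := by
    rw [hk, ← Int.cast_sub, ← Int.cast_abs, ← Int.cast_one, Int.cast_le]
    exact Int.one_le_abs (sub_ne_zero.2 fun h' => h (hk.trans (congrArg _ h')))
  simp only [branchHeight]; linarith [im_le_one_of_mem_Sspace hz]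

lemma eq_of_branchHeight_eq {m : ℤ} {z : ℂ} (hz : z ∈ Sspace) {s : ℝ} (hs : 0 ≤ s)
    (h : branchHeight m z = s) : z = ⟨m, s⟩ := by
  by_cases hre : z.re = m
  · exact Complex.ext hre (branchHeight_of_re_eq hre ▸ h)
  · exact absurd (h ▸ branchHeight_neg hz hre) hs.not_gt

def tiltedRe (z : ℂ) : ℝ := z.re + z.im / 2

lemma eq_of_tiltedRe_eq {z : ℂ} (hz : z ∈ Sspace) {m : ℤ} (h : tiltedRe z = m) :
    z = ⟨m, 0⟩ := by
  refine (im_nonneg_of_mem_Sspace hz).eq_or_lt.elim (fun h0 => ?_) fun hpos => ?_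
  · exact Complex.ext (by simpa [tiltedRe, ← h0] using h) h0.symm
  obtain ⟨k, hk⟩ := exists_int_re_of_mem_Sspace hz hpos
  have hle := im_le_one_of_mem_Sspace hz
  have h1 : (k : ℝ) < m := by simp only [tiltedRe] at h; linarith
  have h2 : (m : ℝ) < k + 1 := by simp only [tiltedRe] at h; linarith
  norm_cast at h1 h2
  omega

lemma tiltedRe_lt {z : ℂ} (hz : z ∈ Sspace) {m : ℤ} (h : z.re < m) : tiltedRe z < m := by
  rcases (im_nonneg_of_mem_Sspace hz).eq_or_lt with h0 | hpos
  · simp [tiltedRe, ← h0, h]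
  obtain ⟨k, hk⟩ := exists_int_re_of_mem_Sspace hz hpos
  have hle := im_le_one_of_mem_Sspace hz
  have hkm : (k : ℝ) + 1 ≤ m := by
    rw [hk] at h; exact_mod_cast (show k + 1 ≤ m by exact_mod_cast h)
  simp only [tiltedRe]; linarith

lemma lt_tiltedRe {z : ℂ} (hz : z ∈ Sspace) {r : ℝ} (h : r < z.re) : r < tiltedRe z := by
  simp only [tiltedRe]; linarith [im_nonneg_of_mem_Sspace hz]

variable (hC : IsPreconnected C) (hCS : C ⊆ Sspace) (hx : x ∈ C) (hy : y ∈ C)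
include hC hCS hx hy

lemma mk_mem_of_mem_uIcc_branchHeight {m : ℤ} {s : ℝ} (hs : 0 ≤ s)
    (hsxy : s ∈ uIcc (branchHeight m x) (branchHeight m y)) : (⟨m, s⟩ : ℂ) ∈ C :=
  have hp : branchHeight m ⟨m, s⟩ = s := branchHeight_of_re_eq rfl
  mem_of_separating hC hCS hx hy (continuous_branchHeight m) (hp.symm ▸ hsxy)
    fun _ hz hgz => eq_of_branchHeight_eq hz hs (hgz.trans hp)

lemma mk_zero_mem_of_re_lt_of_lt_re {r : ℝ} (hxr : x.re < r) (hry : r < y.re) :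
    (⟨r, 0⟩ : ℂ) ∈ C := by
  by_cases hr : r ∈ range ((↑) : ℤ → ℝ)
  · obtain ⟨m, rfl⟩ := hr
    refine mem_of_separating hC hCS hx hy (g := tiltedRe) (by unfold tiltedRe; fun_prop) ?_
      fun z hz hgz => eq_of_tiltedRe_eq hz (by simpa [tiltedRe] using hgz)
    simp only [tiltedRe, zero_div, add_zero]
    exact Icc_subset_uIcc ⟨(tiltedRe_lt (hCS hx) hxr).le, (lt_tiltedRe (hCS hy) hry).le⟩
  · exact mem_of_separating hC hCS hx hy Complex.continuous_re
      (Icc_subset_uIcc ⟨hxr.le, hry.le⟩) fun z hz hgz => eq_of_re_eq_of_notMem_range hz hr hgz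

lemma mk_re_mem_of_le_im (hre : y.re ≠ x.re) {s : ℝ} (hs : 0 ≤ s) (hsx : s ≤ x.im) :
    (⟨x.re, s⟩ : ℂ) ∈ C := by
  rcases (im_nonneg_of_mem_Sspace (hCS hx)).eq_or_lt with h0 | hpos
  · have : (⟨x.re, s⟩ : ℂ) = x := Complex.ext rfl (le_antisymm (h0 ▸ hsx) hs |>.trans h0)
    exact this ▸ hx
  obtain ⟨m, hm⟩ := exists_int_re_of_mem_Sspace (hCS hx) hpos
  rw [hm]
  refine mk_mem_of_mem_uIcc_branchHeight hC hCS hx hy hs ?_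
  rw [branchHeight_of_re_eq hm]
  exact Icc_subset_uIcc' ⟨(branchHeight_neg (hCS hy) (hm ▸ hre)).le.trans hs, hsx⟩

end Separation

section Arc

/-- For `m < M`: down the branch at `m` for `t ≤ m`, along the real axis for `t ∈ [m, M]`,
and up the branch at `M` for `M ≤ t`. -/
def bridgePath (m M t : ℝ) : ℂ := ⟨max m (min M t), |t - max m (min M t)|⟩

def bridgeCoord (m M : ℝ) (z : ℂ) : ℝ := z.re + z.im * (2 * z.re - m - M) / (M - m)

variable {m M t : ℝ}

lemma bridgePath_of_le_left (h : m ≤ M) (ht : t ≤ m) : bridgePath m M t = ⟨m, m - t⟩ := by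
  simp only [bridgePath, min_eq_right (ht.trans h), max_eq_left ht, abs_sub_comm t m,
    abs_of_nonneg (sub_nonneg.2 ht)]

lemma bridgePath_of_mem (ht : t ∈ Icc m M) : bridgePath m M t = ⟨t, 0⟩ := by
  simp [bridgePath, min_eq_right ht.2, max_eq_right ht.1]

lemma bridgePath_of_right_le (h : m ≤ M) (ht : M ≤ t) : bridgePath m M t = ⟨M, t - M⟩ := by
  simp only [bridgePath, min_eq_left ht, max_eq_right h, abs_of_nonneg (sub_nonneg.2 ht)]

lemma bridgeCoord_of_re_left (h : m < M) {z : ℂ} (hz : z.re = m) :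
    bridgeCoord m M z = m - z.im := by
  have : M - m ≠ 0 := (sub_pos.2 h).ne'
  simp only [bridgeCoord, hz]
  field_simp
  ring

lemma bridgeCoord_of_re_right (h : m < M) {z : ℂ} (hz : z.re = M) :
    bridgeCoord m M z = M + z.im := by
  have : M - m ≠ 0 := (sub_pos.2 h).ne'
  simp only [bridgeCoord, hz]
  field_simp
  ring

lemma bridgeCoord_bridgePath (h : m < M) (t : ℝ) : bridgeCoord m M (bridgePath m M t) = t := by
  rcases le_total t m with ht | ht
  · rw [bridgePath_of_le_left h.le ht, bridgeCoord_of_re_left h rfl]; ring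
  rcases le_total t M with ht' | ht'
  · simp [bridgePath_of_mem ⟨ht, ht'⟩, bridgeCoord]
  · rw [bridgePath_of_right_le h.le ht', bridgeCoord_of_re_right h rfl]; ring

def sPath (x y : ℂ) : ℝ → ℂ :=
  if x.re = y.re then fun t => ⟨x.re, t⟩ else bridgePath (min x.re y.re) (max x.re y.re)

def sCoord (x y : ℂ) : ℂ → ℝ :=
  if x.re = y.re then Complex.im else bridgeCoord (min x.re y.re) (max x.re y.re)

variable {x y : ℂ}

lemma sPath_comm (x y : ℂ) : sPath x y = sPath y x := by
  unfold sPath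
  by_cases h : x.re = y.re
  · simp [h]
  · simp [h, Ne.symm h, min_comm, max_comm]

lemma sCoord_comm (x y : ℂ) : sCoord x y = sCoord y x := by
  unfold sCoord
  by_cases h : x.re = y.re
  · simp [h]
  · simp [h, Ne.symm h, min_comm, max_comm]

lemma continuous_sPath (x y : ℂ) : Continuous (sPath x y) := by
  unfold sPath bridgePath
  split_ifs <;> fun_prop

lemma continuous_sCoord (x y : ℂ) : Continuous (sCoord x y) := by
  unfold sCoord bridgeCoord
  split_ifs <;> fun_prop

lemma sCoord_sPath (x y : ℂ) (t : ℝ) : sCoord x y (sPath x y t) = t := by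
  unfold sCoord sPath
  split_ifs with h
  · rfl
  · exact bridgeCoord_bridgePath (min_lt_max.2 h) t

lemma sPath_of_re_lt (h : x.re < y.re) : sPath x y = bridgePath x.re y.re := by
  simp [sPath, h.ne, min_eq_left h.le, max_eq_right h.le]

lemma sCoord_of_re_lt (h : x.re < y.re) : sCoord x y = bridgeCoord x.re y.re := by
  simp [sCoord, h.ne, min_eq_left h.le, max_eq_right h.le]

lemma sPath_sCoord_left (hx : x ∈ Sspace) : sPath x y (sCoord x y x) = x := by
  rcases lt_trichotomy x.re y.re with h | h | h
  · rw [sPath_of_re_lt h, sCoord_of_re_lt h, bridgeCoord_of_re_left h rfl,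
      bridgePath_of_le_left h.le (by linarith [im_nonneg_of_mem_Sspace hx])]
    exact Complex.ext rfl (by simp)
  · simp only [sPath, sCoord, if_pos h]
  · rw [sPath_comm, sCoord_comm, sPath_of_re_lt h, sCoord_of_re_lt h,
      bridgeCoord_of_re_right h rfl,
      bridgePath_of_right_le h.le (by linarith [im_nonneg_of_mem_Sspace hx])]
    exact Complex.ext rfl (by simp)

lemma sPath_sCoord_right (hy : y ∈ Sspace) : sPath x y (sCoord x y y) = y := by
  rw [sPath_comm, sCoord_comm]; exact sPath_sCoord_left hy

end Arc

section Hull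

variable {C : Set ℂ} {x y : ℂ}

lemma sPath_mem_of_re_lt (hC : IsPreconnected C) (hCS : C ⊆ Sspace) (hx : x ∈ C) (hy : y ∈ C)
    (h : x.re < y.re) {t : ℝ} (ht : t ∈ uIcc (sCoord x y x) (sCoord x y y)) :
    sPath x y t ∈ C := by
  have hx0 := im_nonneg_of_mem_Sspace (hCS hx)
  have hy0 := im_nonneg_of_mem_Sspace (hCS hy)
  rw [sCoord_of_re_lt h, bridgeCoord_of_re_left h rfl, bridgeCoord_of_re_right h rfl,
    uIcc_of_le (by linarith)] at ht
  rw [sPath_of_re_lt h]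
  rcases le_or_gt t x.re with h1 | h1
  · rw [bridgePath_of_le_left h.le h1]
    exact mk_re_mem_of_le_im hC hCS hx hy h.ne' (sub_nonneg.2 h1) (by linarith [ht.1])
  rcases le_or_gt y.re t with h2 | h2
  · rw [bridgePath_of_right_le h.le h2]
    exact mk_re_mem_of_le_im hC hCS hy hx h.ne (sub_nonneg.2 h2) (by linarith [ht.2])
  · rw [bridgePath_of_mem ⟨h1.le, h2.le⟩]
    exact mk_zero_mem_of_re_lt_of_lt_re hC hCS hx hy h1 h2

lemma sPath_mem_of_re_eq (hC : IsPreconnected C) (hCS : C ⊆ Sspace) (hx : x ∈ C) (hy : y ∈ C)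
    (h : x.re = y.re) {t : ℝ} (ht : t ∈ uIcc (sCoord x y x) (sCoord x y y)) :
    sPath x y t ∈ C := by
  simp only [sCoord, sPath, if_pos h] at ht ⊢
  have ht0 : 0 ≤ t := le_trans (le_min (im_nonneg_of_mem_Sspace (hCS hx))
    (im_nonneg_of_mem_Sspace (hCS hy))) ht.1
  by_cases hint : ∃ m : ℤ, x.re = m
  · obtain ⟨m, hm⟩ := hint
    rw [hm]
    exact mk_mem_of_mem_uIcc_branchHeight hC hCS hx hy ht0
      (by rwa [branchHeight_of_re_eq hm, branchHeight_of_re_eq (h ▸ hm)])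
  · have him : ∀ z ∈ C, z.re = x.re → z.im = 0 := fun z hz hre =>
      (im_nonneg_of_mem_Sspace (hCS hz)).eq_or_lt.elim Eq.symm fun hpos =>
        absurd ((hre ▸ exists_int_re_of_mem_Sspace (hCS hz) hpos)) hint
    have hxt : t = x.im := by
      rw [him x hx rfl, him y hy h.symm, uIcc_self] at ht
      rw [ht, him x hx rfl]
    rw [hxt]
    exact hx

lemma sPath_mem_of_isPreconnected (hC : IsPreconnected C) (hCS : C ⊆ Sspace) (hx : x ∈ C)
    (hy : y ∈ C) {t : ℝ} (ht : t ∈ uIcc (sCoord x y x) (sCoord x y y)) :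
    sPath x y t ∈ C := by
  rcases lt_trichotomy x.re y.re with h | h | h
  · exact sPath_mem_of_re_lt hC hCS hx hy h ht
  · exact sPath_mem_of_re_eq hC hCS hx hy h ht
  · rw [sCoord_comm, uIcc_comm] at ht
    rw [sPath_comm]
    exact sPath_mem_of_re_lt hC hCS hy hx h ht

lemma subset_sHull (A : Set ℂ) : A ⊆ sHull A :=
  subset_sInter fun _ hC => hC.1

lemma mem_sHull_pair_left (x y : ℂ) : x ∈ sHull {x, y} :=
  subset_sHull _ (mem_insert x _)

lemma mem_sHull_pair_right (x y : ℂ) : y ∈ sHull {x, y} :=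
  subset_sHull _ (mem_insert_of_mem x rfl)

lemma sHull_subset {A C : Set ℂ} (hAC : A ⊆ C) (hCS : C ⊆ Sspace) (hC : IsClosed C)
    (hC' : IsConnected C) : sHull A ⊆ C :=
  sInter_subset_of_mem ⟨hAC, hCS, hC, hC'⟩

lemma sHull_subset_image_sPath {A : Set ℂ} {a b : ℝ} (hA : A ⊆ sPath x y '' uIcc a b)
    (hS : sPath x y '' uIcc a b ⊆ Sspace) : sHull A ⊆ sPath x y '' uIcc a b :=
  sHull_subset hA hS (isCompact_uIcc.image (continuous_sPath x y)).isClosed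
    (IsConnected.image ⟨nonempty_uIcc, isPreconnected_uIcc⟩ _
      (continuous_sPath x y).continuousOn)

lemma sHull_pair_eq (hx : x ∈ Sspace) (hy : y ∈ Sspace) :
    sHull {x, y} = sPath x y '' uIcc (sCoord x y x) (sCoord x y y) := by
  have hsub : ∀ C, IsPreconnected C → C ⊆ Sspace → x ∈ C → y ∈ C →
      sPath x y '' uIcc (sCoord x y x) (sCoord x y y) ⊆ C := by
    rintro C hC hCS hxC hyC _ ⟨t, ht, rfl⟩
    exact sPath_mem_of_isPreconnected hC hCS hxC hyC ht
  refine (sHull_subset_image_sPath ?_ (hsub _ isPreconnected_Sspace subset_rfl hx hy)).antisymm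
    (subset_sInter fun C hC => hsub C hC.2.2.2.isPreconnected hC.2.1 (hC.1 (mem_insert x _))
      (hC.1 (mem_insert_of_mem x rfl)))
  rintro _ (rfl | rfl)
  · exact ⟨_, left_mem_uIcc, sPath_sCoord_left hx⟩
  · exact ⟨_, right_mem_uIcc, sPath_sCoord_right hy⟩

end Hull

section Subarc

variable {x y u v z : ℂ} (hx : x ∈ Sspace) (hy : y ∈ Sspace)
include hx hy

lemma sHull_pair_subset_Sspace : sHull {x, y} ⊆ Sspace := by
  rw [sHull_pair_eq hx hy]
  rintro _ ⟨t, ht, rfl⟩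
  exact sPath_mem_of_isPreconnected isPreconnected_Sspace subset_rfl hx hy ht

lemma isPreconnected_sHull_pair : IsPreconnected (sHull {x, y}) := by
  rw [sHull_pair_eq hx hy]
  exact isPreconnected_uIcc.image _ (continuous_sPath x y).continuousOn

lemma sPath_sCoord_of_mem (hz : z ∈ sHull {x, y}) : sPath x y (sCoord x y z) = z := by
  rw [sHull_pair_eq hx hy] at hz
  obtain ⟨t, -, rfl⟩ := hz
  rw [sCoord_sPath]

lemma sCoord_mem_uIcc (hz : z ∈ sHull {x, y}) :
    sCoord x y z ∈ uIcc (sCoord x y x) (sCoord x y y) := by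
  rw [sHull_pair_eq hx hy] at hz
  obtain ⟨t, ht, rfl⟩ := hz
  rwa [sCoord_sPath]

lemma injOn_sCoord : InjOn (sCoord x y) (sHull {x, y}) :=
  LeftInvOn.injOn fun _ hz => sPath_sCoord_of_mem hx hy hz

lemma sHull_pair_eq_of_mem (hu : u ∈ sHull {x, y}) (hv : v ∈ sHull {x, y}) :
    sHull {u, v} = sPath x y '' uIcc (sCoord x y u) (sCoord x y v) := by
  have hBA : sPath x y '' uIcc (sCoord x y u) (sCoord x y v) ⊆ sHull {x, y} := by
    rw [sHull_pair_eq hx hy]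
    exact image_mono (uIcc_subset_uIcc (sCoord_mem_uIcc hx hy hu) (sCoord_mem_uIcc hx hy hv))
  have hHB : sHull {u, v} ⊆ sPath x y '' uIcc (sCoord x y u) (sCoord x y v) := by
    refine sHull_subset_image_sPath ?_ (hBA.trans (sHull_pair_subset_Sspace hx hy))
    rintro _ (rfl | rfl)
    · exact ⟨_, left_mem_uIcc, sPath_sCoord_of_mem hx hy hu⟩
    · exact ⟨_, right_mem_uIcc, sPath_sCoord_of_mem hx hy hv⟩
  refine hHB.antisymm ?_
  rintro _ ⟨t, ht, rfl⟩
  have hH := isPreconnected_sHull_pair (sHull_pair_subset_Sspace hx hy hu)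
    (sHull_pair_subset_Sspace hx hy hv)
  obtain ⟨w, hw, rfl⟩ :=
    (hH.image _ (continuous_sCoord x y).continuousOn).ordConnected.uIcc_subset
      (mem_image_of_mem _ (mem_sHull_pair_left u v))
      (mem_image_of_mem _ (mem_sHull_pair_right u v)) ht
  rwa [sPath_sCoord_of_mem hx hy (hBA (hHB hw))]

lemma sHull_pair_subset_of_mem (hu : u ∈ sHull {x, y}) (hv : v ∈ sHull {x, y}) :
    sHull {u, v} ⊆ sHull {x, y} := by
  rw [sHull_pair_eq_of_mem hx hy hu hv, sHull_pair_eq hx hy]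
  exact image_mono (uIcc_subset_uIcc (sCoord_mem_uIcc hx hy hu) (sCoord_mem_uIcc hx hy hv))

lemma sCoord_image_sHull_pair (hu : u ∈ sHull {x, y}) (hv : v ∈ sHull {x, y}) :
    sCoord x y '' sHull {u, v} = uIcc (sCoord x y u) (sCoord x y v) := by
  rw [sHull_pair_eq_of_mem hx hy hu hv, image_image]
  simp [sCoord_sPath]

end Subarc

section RealLine

lemma abs_sub_lt_of_mem_uIcc {s t w : ℝ} (hw : w ∈ uIcc s t) (hne : w ≠ s) :
    |t - w| < |t - s| := by
  rcases mem_uIcc.1 hw with ⟨h1, h2⟩ | ⟨h1, h2⟩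
  · rw [abs_of_nonneg (sub_nonneg.2 h2), abs_of_nonneg (by linarith)]
    linarith [h1.lt_of_ne hne.symm]
  · rw [abs_of_nonpos (sub_nonpos.2 h1), abs_of_nonpos (by linarith)]
    linarith [h2.lt_of_ne hne]

lemma mem_uIcc_or_mem_uIcc_of_notMem_uIcc {c d e : ℝ} (he : e ∉ uIcc c d) :
    c ∈ uIcc e d ∨ d ∈ uIcc c e := by
  simp only [mem_uIcc, not_or, not_and_or, not_le] at he ⊢
  rcases le_total c d with h | h
  · rcases he.1 with h' | h'
    · exact Or.inl (Or.inl ⟨h'.le, h⟩)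
    · exact Or.inr (Or.inl ⟨h, h'.le⟩)
  · rcases he.2 with h' | h'
    · exact Or.inr (Or.inr ⟨h'.le, h⟩)
    · exact Or.inl (Or.inr ⟨h, h'.le⟩)

lemma exists_uIcc_image_eq {g : ℝ → ℝ} {a b c d : ℝ} (hg : ContinuousOn g (uIcc a b))
    (hcd : uIcc c d ⊆ g '' uIcc a b) :
    ∃ s ∈ uIcc a b, ∃ t ∈ uIcc a b, g '' uIcc s t = uIcc c d := by
  set K := uIcc a b ×ˢ uIcc a b
  set P := K ∩ (fun p : ℝ × ℝ => (g p.1, g p.2)) ⁻¹' {(c, d)}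
  have hK : IsCompact K := isCompact_uIcc.prod isCompact_uIcc
  have hP : IsCompact P := hK.of_isClosed_subset
    (((hg.comp continuousOn_fst fun _ hp => hp.1).prodMk
      (hg.comp continuousOn_snd fun _ hp => hp.2)).preimage_isClosed_of_isClosed
      hK.isClosed isClosed_singleton) inter_subset_left
  obtain ⟨p, hpK, hgp⟩ := hcd left_mem_uIcc
  obtain ⟨q, hqK, hgq⟩ := hcd right_mem_uIcc
  -- a pair of a `c`-point and a `d`-point at minimal distance bounds the required subinterval
  obtain ⟨⟨s, t⟩, ⟨⟨hs, ht⟩, hst⟩, hmin⟩ := hP.exists_isMinOn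
    ⟨(p, q), ⟨hpK, hqK⟩, by simp [hgp, hgq]⟩
    (continuous_abs.comp (continuous_snd.sub continuous_fst)).continuousOn
  dsimp only at hs ht
  obtain ⟨hgs, hgt⟩ : g s = c ∧ g t = d := by simpa using hst
  have hmin' : ∀ s' t', s' ∈ uIcc s t → t' ∈ uIcc s t → g s' = c → g t' = d →
      |t - s| ≤ |t' - s'| := fun s' t' hs' ht' hgs' hgt' =>
    isMinOn_iff.1 hmin (s', t')
      ⟨⟨uIcc_subset_uIcc hs ht hs', uIcc_subset_uIcc hs ht ht'⟩, by simp [hgs', hgt']⟩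
  refine ⟨s, hs, t, ht, subset_antisymm ?_ ?_⟩
  · rintro _ ⟨w, hw, rfl⟩
    by_contra hgw
    have hws : w ≠ s := fun h => hgw (h ▸ hgs ▸ left_mem_uIcc)
    have hwt : w ≠ t := fun h => hgw (h ▸ hgt ▸ right_mem_uIcc)
    rcases mem_uIcc_or_mem_uIcc_of_notMem_uIcc hgw with h | h
    · obtain ⟨s', hs', hgs'⟩ := intermediate_value_uIcc
        (hg.mono (uIcc_subset_uIcc (uIcc_subset_uIcc hs ht hw) ht)) (hgt ▸ h)
      have := hmin' s' t (uIcc_subset_uIcc hw right_mem_uIcc hs') right_mem_uIcc hgs' hgt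
      have := abs_sub_le_of_uIcc_subset_uIcc (uIcc_subset_uIcc hs' right_mem_uIcc)
      have := abs_sub_lt_of_mem_uIcc hw hws
      linarith
    · obtain ⟨t', ht', hgt'⟩ := intermediate_value_uIcc
        (hg.mono (uIcc_subset_uIcc hs (uIcc_subset_uIcc hs ht hw))) (hgs ▸ h)
      have := hmin' s t' left_mem_uIcc (uIcc_subset_uIcc left_mem_uIcc hw ht') hgs hgt'
      have := abs_sub_le_of_uIcc_subset_uIcc (uIcc_subset_uIcc left_mem_uIcc ht')
      have := abs_sub_lt_of_mem_uIcc (uIcc_comm s t ▸ hw) hwt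
      rw [abs_sub_comm s w, abs_sub_comm s t] at this
      linarith
  · exact hgs ▸ hgt ▸ intermediate_value_uIcc (hg.mono (uIcc_subset_uIcc hs ht))

end RealLine

section Covering

variable {G : ℂ → ℂ} {u v a b : ℂ} (ha : a ∈ Sspace) (hb : b ∈ Sspace)
include ha hb

lemma sCoord_image_sHull_pair_self :
    sCoord a b '' sHull {a, b} = uIcc (sCoord a b a) (sCoord a b b) :=
  sCoord_image_sHull_pair ha hb (mem_sHull_pair_left a b) (mem_sHull_pair_right a b)

lemma exists_sHull_pair_image_eq (hu : u ∈ Sspace) (hv : v ∈ Sspace)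
    (hG : ContinuousOn G (sHull {u, v})) (himage : G '' sHull {u, v} = sHull {a, b})
    {p q : ℂ} (hp : p ∈ sHull {a, b}) (hq : q ∈ sHull {a, b}) :
    ∃ u' ∈ sHull {u, v}, ∃ v' ∈ sHull {u, v}, G '' sHull {u', v'} = sHull {p, q} := by
  have hK := sHull_pair_eq hu hv
  set γ := sPath u v
  set κ := sCoord a b
  have hg : ContinuousOn (κ ∘ G ∘ γ) (uIcc (sCoord u v u) (sCoord u v v)) :=
    (continuous_sCoord a b).comp_continuousOn
      (hG.comp (continuous_sPath u v).continuousOn (hK ▸ mapsTo_image _ _))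
  have hgJ : (κ ∘ G ∘ γ) '' uIcc (sCoord u v u) (sCoord u v v) = uIcc (κ a) (κ b) := by
    rw [image_comp, image_comp, ← hK, himage, sCoord_image_sHull_pair_self ha hb]
  obtain ⟨s, hs, t, ht, hst⟩ := exists_uIcc_image_eq hg
    (hgJ ▸ uIcc_subset_uIcc (sCoord_mem_uIcc ha hb hp) (sCoord_mem_uIcc ha hb hq))
  have hsK : γ s ∈ sHull {u, v} := hK ▸ mem_image_of_mem _ hs
  have htK : γ t ∈ sHull {u, v} := hK ▸ mem_image_of_mem _ ht
  refine ⟨γ s, hsK, γ t, htK, (injOn_sCoord ha hb).image_eq_image_iff ?_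
    (sHull_pair_subset_of_mem ha hb hp hq) |>.1 ?_⟩
  · exact himage ▸ image_mono (sHull_pair_subset_of_mem hu hv hsK htK)
  · rw [sCoord_image_sHull_pair ha hb hp hq, ← hst, sHull_pair_eq_of_mem hu hv hsK htK,
      sCoord_sPath, sCoord_sPath, image_comp, image_comp]

lemma exists_fixedPt_of_image_sHull_pair_eq (hu : u ∈ sHull {a, b}) (hv : v ∈ sHull {a, b})
    (hG : ContinuousOn G (sHull {u, v})) (himage : G '' sHull {u, v} = sHull {a, b}) :
    ∃ z ∈ sHull {u, v}, IsFixedPt G z := by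
  have hK := sHull_pair_eq_of_mem ha hb hu hv
  set γ := sPath a b
  set κ := sCoord a b
  have hg : ContinuousOn (κ ∘ G ∘ γ) (uIcc (κ u) (κ v)) :=
    (continuous_sCoord a b).comp_continuousOn
      (hG.comp (continuous_sPath a b).continuousOn (hK ▸ mapsTo_image _ _))
  have hsurj : SurjOn (κ ∘ G ∘ γ) (uIcc (κ u) (κ v)) (uIcc (κ u) (κ v)) := by
    rw [SurjOn, image_comp, image_comp, ← hK, himage, sCoord_image_sHull_pair_self ha hb]
    exact uIcc_subset_uIcc (sCoord_mem_uIcc ha hb hu) (sCoord_mem_uIcc ha hb hv)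
  obtain ⟨t, ht, hfix⟩ := exists_mem_uIcc_isFixedPt_of_surjOn hg hsurj
  have htK : γ t ∈ sHull {u, v} := hK ▸ mem_image_of_mem _ ht
  have hmem : G (γ t) ∈ sHull {a, b} := himage ▸ mem_image_of_mem _ htK
  refine ⟨γ t, htK, ?_⟩
  calc G (γ t) = γ (κ (G (γ t))) := (sPath_sCoord_of_mem ha hb hmem).symm
    _ = γ t := congrArg γ hfix

end Covering

def chainComp {α : Type*} (Fs : ℕ → α → α) : ℕ → α → α
  | 0 => id
  | k + 1 => Fs k ∘ chainComp Fs k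

lemma exists_sHull_pair_chain {n : ℕ} {I : ℕ → Set ℂ} {Fs : ℕ → ℂ → ℂ}
    (hI : ∀ i ≤ n, ∃ a ∈ Sspace, ∃ b ∈ Sspace, I i = sHull {a, b})
    (hcont : ∀ i < n, ContinuousOn (Fs i) (I i))
    (hcov : ∀ i < n, Covers (Fs i) (I i) (I (i + 1))) :
    ∀ k ≤ n, ∃ u ∈ I 0, ∃ v ∈ I 0, ContinuousOn (chainComp Fs k) (sHull {u, v}) ∧
      (∀ j ≤ k, MapsTo (chainComp Fs j) (sHull {u, v}) (I j)) ∧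
      chainComp Fs k '' sHull {u, v} = I k := by
  obtain ⟨a₀, ha₀, b₀, hb₀, hI₀⟩ := hI 0 (Nat.zero_le n)
  have hI₀S : I 0 ⊆ Sspace := hI₀ ▸ sHull_pair_subset_Sspace ha₀ hb₀
  intro k
  induction k with
  | zero =>
    refine fun _ => ⟨a₀, hI₀ ▸ mem_sHull_pair_left a₀ b₀, b₀,
      hI₀ ▸ mem_sHull_pair_right a₀ b₀, continuousOn_id, fun j hj => ?_,
      by rw [hI₀]; exact image_id _⟩
    rw [Nat.le_zero.1 hj, hI₀]
    exact mapsTo_id _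
  | succ k ih =>
    intro hk
    obtain ⟨u, hu, v, hv, hG, hmaps, himage⟩ := ih (by omega)
    obtain ⟨a, ha, b, hb, hIk⟩ := hI k (by omega)
    obtain ⟨p, q, hp, hq, hpq, hFpq⟩ := hcov k hk
    obtain ⟨u', hu', v', hv', himage'⟩ := exists_sHull_pair_image_eq ha hb
      (hI₀S hu) (hI₀S hv) hG (himage.trans hIk) (hIk ▸ hp) (hIk ▸ hq)
    have hsub := sHull_pair_subset_of_mem (hI₀S hu) (hI₀S hv) hu' hv'
    have himage_succ : chainComp Fs (k + 1) '' sHull {u', v'} = I (k + 1) := by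
      rw [chainComp, image_comp, himage', hFpq]
    refine ⟨u', hmaps 0 (Nat.zero_le k) hu', v', hmaps 0 (Nat.zero_le k) hv', ?_, fun j hj => ?_,
      himage_succ⟩
    · exact ((hcont k hk).mono hpq).comp (hG.mono hsub) (himage' ▸ mapsTo_image _ _)
    · rcases Nat.le_succ_iff.1 hj with hj | rfl
      · exact (hmaps j hj).mono_left hsub
      · exact himage_succ ▸ mapsTo_image _ _

theorem statement10_general (n : ℕ) (I : ℕ → Set ℂ) (Fs : ℕ → ℂ → ℂ)
    (hI : ∀ i ≤ n, IsCNInterval (I i)) (hIn : I n = I 0)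
    (hcont : ∀ i < n, ContinuousOn (Fs i) (I i))
    (hcov : ∀ i < n, Covers (Fs i) (I i) (I (i + 1))) :
    ∃ x : ℕ → ℂ, (∀ i ≤ n, x i ∈ I i) ∧ (∀ i < n, Fs i (x i) = x (i + 1)) ∧
      x n = x 0 := by
  have hI' : ∀ i ≤ n, ∃ a ∈ Sspace, ∃ b ∈ Sspace, I i = sHull {a, b} := fun i hi => by
    obtain ⟨a, b, ha, hb, -, h⟩ := hI i hi
    exact ⟨a, ha, b, hb, h⟩
  obtain ⟨u, hu, v, hv, hG, hmaps, himage⟩ := exists_sHull_pair_chain hI' hcont hcov n le_rfl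
  obtain ⟨a, ha, b, hb, hI₀⟩ := hI' 0 (Nat.zero_le n)
  rw [hIn, hI₀] at himage
  rw [hI₀] at hu hv
  obtain ⟨x₀, hx₀, hfix⟩ := exists_fixedPt_of_image_sHull_pair_eq ha hb hu hv hG himage
  exact ⟨fun i => chainComp Fs i x₀, fun i hi => hmaps i hi hx₀, fun i _ => rfl, hfix⟩

/-- Given a loop of coverings `I_0 → I_1 → ⋯ → I_n = I_0` for continuous
maps `F_i : I_i → S`, there are points `x_i ∈ I_i` with `F_i(x_i) = x_{i+1}` and
`x_n = x_0`. -/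
theorem statement10 (n : ℕ) (I : ℕ → Set ℂ) (Fs : ℕ → ℂ → ℂ)
    (hI : ∀ i ≤ n, IsCNInterval (I i)) (hIn : I n = I 0)
    (hcont : ∀ i < n, ContinuousOn (Fs i) (I i))
    (hmaps : ∀ i < n, Set.MapsTo (Fs i) (I i) Sspace)
    (hcov : ∀ i < n, Covers (Fs i) (I i) (I (i + 1))) :
    ∃ x : ℕ → ℂ, (∀ i ≤ n, x i ∈ I i) ∧ (∀ i < n, Fs i (x i) = x (i + 1)) ∧
      x n = x 0 :=
  statement10_general n I Fs hI hIn hcont hcov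

end
end
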